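/- Random intervals: fix integers a, and L, k > 0. Let the initial configuration λ_0 of the '1 Or 3' cellular automaton be i.i.d. fair bits on [0, L] and 0 elsewhere. Suppose that in the evolution λ• from a single 1 at the origin, λ•_t restricted to [a, a+k] equals 1 followed by k zeros (λ•_t(a) = 1 and λ•_t(a+i) = 0 for 1 ≤ i ≤ k). Then for any x ∈ [−a, L−a−k], the random variables λ_t(x), λ_t(x+1), …, λ_t(x+k) are independent fair bits. -/

import Mathlib

open MeasureTheory

/-- Configurations of the one-dimensional CA: states in `ZMod 2` indexed by `ℤ`. -/
abbrev Config := ℤ → ZMod 2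

/-- One step of the `1 Or 3` rule. -/
def step (f : Config) : Config := fun x => f (x - 1) + f x + f (x + 1)

/-- Evolution of the `1 Or 3` rule. -/
def evol (f : Config) (t : ℕ) : Config := step^[t] f

/-- Single `1` at the origin. -/
def single : Config := fun x => if x = 0 then 1 else 0

/-- The random variables `X x`, `x ∈ K`, are i.i.d. fair bits under `μ`:
every finite cylinder event indexed inside `K` has the product probability. -/
def IIDFairOn {Ω : Type*} [MeasurableSpace Ω] (μ : Measure Ω)
    (X : Ω → Config) (K : Set ℤ) : Prop :=
  ∀ S : Finset ℤ, ↑S ⊆ K → ∀ v : ℤ → ZMod 2,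
    μ {ω | ∀ x ∈ S, X ω x = v x} = (2 : ENNReal)⁻¹ ^ S.card

lemma evol_succ (f : Config) (t : ℕ) : evol f (t+1) = evol (step f) t := by
  simp [evol, Function.iterate_succ_apply]

lemma step_add (f g : Config) : step (f + g) = step f + step g := by
  funext z; simp [step]; ring

lemma evol_add (f g : Config) (t : ℕ) : evol (f + g) t = evol f t + evol g t := by
  induction t generalizing f g with
  | zero => rfl
  | succ n ih => rw [evol_succ, step_add, ih, evol_succ, evol_succ]

lemma step_smul (c : ZMod 2) (f : Config) : step (c • f) = c • step f := by
  funext z; simp [step]; ring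

lemma evol_smul (c : ZMod 2) (f : Config) (t : ℕ) : evol (c • f) t = c • evol f t := by
  induction t generalizing f with
  | zero => rfl
  | succ n ih => rw [evol_succ, step_smul, ih, evol_succ]

lemma evol_zero (t : ℕ) : evol (0 : Config) t = 0 := by
  have := evol_smul 0 0 t
  simpa using this

lemma evol_sum {ι : Type*} (F : Finset ι) (g : ι → Config) (t : ℕ) :
    evol (∑ i ∈ F, g i) t = ∑ i ∈ F, evol (g i) t := by
  classical
  induction F using Finset.induction with
  | empty => simpa using evol_zero t
  | @insert _ _ h ih => simp [Finset.sum_insert h, evol_add, ih]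

def shiftC (y : ℤ) (f : Config) : Config := fun z => f (z - y)

lemma step_trans (y : ℤ) (f : Config) : step (shiftC y f) = shiftC y (step f) := by
  funext z
  simp only [step, shiftC]
  ring_nf

lemma evol_trans (y : ℤ) (f : Config) (t : ℕ) : evol (shiftC y f) t = shiftC y (evol f t) := by
  induction t generalizing f with
  | zero => rfl
  | succ n ih => rw [evol_succ, step_trans, ih, evol_succ]

def refl' (f : Config) : Config := fun z => f (-z)

lemma step_refl (f : Config) : step (refl' f) = refl' (step f) := by
  funext z
  simp only [step, refl']
  have h1 : -z - 1 = -(z+1) := by ring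
  have h2 : -z + 1 = -(z-1) := by ring
  rw [h1, h2]; ring

lemma evol_refl (f : Config) (t : ℕ) : evol (refl' f) t = refl' (evol f t) := by
  induction t generalizing f with
  | zero => rfl
  | succ n ih => rw [evol_succ, step_refl, ih, evol_succ]

lemma refl_single : refl' single = single := by
  funext z; simp [refl', single, neg_eq_zero]

lemma evol_single_neg (t : ℕ) (z : ℤ) : evol single t (-z) = evol single t z := by
  have := congrFun (evol_refl single t) z
  rw [refl_single] at this
  simpa [refl'] using this.symm

lemma decompose (L : ℕ) (f : Config) (hf : ∀ y ∉ Set.Icc (0:ℤ) (L:ℤ), f y = 0) :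
    f = ∑ y ∈ Finset.Icc (0:ℤ) (L:ℤ), f y • shiftC y single := by
  funext z
  rw [Finset.sum_apply]
  by_cases hz : z ∈ Finset.Icc (0:ℤ) (L:ℤ)
  · rw [Finset.sum_eq_single z]
    · simp [shiftC, single]
    · intro b _ hb
      simp [shiftC, single, sub_eq_zero, hb.symm]
    · intro h; exact absurd hz h
  · rw [hf z (by simpa using hz)]
    symm
    apply Finset.sum_eq_zero
    intro y hy
    have : z ≠ y := fun h => hz (h ▸ hy)
    simp [shiftC, single, sub_eq_zero, this]

lemma evol_eq_sum (L : ℕ) (f : Config) (hf : ∀ y ∉ Set.Icc (0:ℤ) (L:ℤ), f y = 0)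
    (t : ℕ) (z : ℤ) :
    evol f t z = ∑ y ∈ Finset.Icc (0:ℤ) (L:ℤ), f y * evol single t (z - y) := by
  conv_lhs => rw [decompose L f hf]
  rw [evol_sum, Finset.sum_apply]
  refine Finset.sum_congr rfl fun y _ => ?_
  rw [evol_smul, evol_trans]
  simp [shiftC, smul_eq_mul]

/-- Index finset -/
noncomputable def PP (L : ℕ) : Finset ℤ := Finset.Icc (0:ℤ) (L:ℤ)

/-- Linear functional giving the evolved value at `z` from the values on `[0,L]`. -/
noncomputable def Phi (L t : ℕ) (g : Config) (z : ℤ) : ZMod 2 :=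
  ∑ y ∈ PP L, g y * evol single t (z - y)

/-- Extension of a finitely-supported assignment by `0`. -/
noncomputable def extW (L : ℕ) (w : ↥(PP L) → ZMod 2) : Config :=
  fun y => if h : y ∈ PP L then w ⟨y, h⟩ else 0

lemma Phi_congr (L t : ℕ) (g g' : Config) (h : ∀ y ∈ PP L, g y = g' y) (z : ℤ) :
    Phi L t g z = Phi L t g' z :=
  Finset.sum_congr rfl fun y hy => by rw [h y hy]

lemma evol_eq_Phi (L t : ℕ) (f : Config) (hf : ∀ y ∉ Set.Icc (0:ℤ) (L:ℤ), f y = 0) (z : ℤ) :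
    evol f t z = Phi L t f z := evol_eq_sum L f hf t z

/-- The window substitution map. -/
noncomputable def Psi (L t : ℕ) (a x : ℤ) (k : ℕ) (w : ↥(PP L) → ZMod 2) : ↥(PP L) → ZMod 2 :=
  fun y => if (y:ℤ) ∈ Finset.Icc (x+a) (x+a+k) then Phi L t (extW L w) ((y:ℤ) - a) else w y

section inj
variable {L t : ℕ} {a x : ℤ} {k : ℕ}

lemma Psi_injective
    (h1 : evol single t a = 1)
    (h0 : ∀ i : ℕ, 1 ≤ i → i ≤ k → evol single t (a + i) = 0)
    (hw1 : 0 ≤ x + a) (hw2 : x + a + k ≤ L) :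
    Function.Injective (Psi L t a x k) := by
  intro w w' h
  -- values agree outside the window
  have hout : ∀ y : ↥(PP L), (y:ℤ) ∉ Finset.Icc (x+a) (x+a+(k:ℤ)) → w y = w' y := by
    intro y hy
    have := congrFun h y
    simpa [Psi, hy] using this
  set d : Config := fun y => extW L w y - extW L w' y with hd
  have hd_out : ∀ y : ℤ, y ∉ Finset.Icc (x+a) (x+a+(k:ℤ)) → d y = 0 := by
    intro y hy
    by_cases hyP : y ∈ PP L
    · have := hout ⟨y, hyP⟩ hy
      simp [hd, extW, hyP, this]
    · simp [hd, extW, hyP]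
  -- window membership in PP L
  have hmemP : ∀ i : ℕ, i ≤ k → (x + a + (i:ℤ)) ∈ PP L := by
    intro i hi
    simp only [PP, Finset.mem_Icc]
    omega
  -- equality of Phi on window
  have hPhi : ∀ i : ℕ, i ≤ k →
      Phi L t (extW L w) (x + (i:ℤ)) = Phi L t (extW L w') (x + (i:ℤ)) := by
    intro i hi
    have hmem : ((⟨x + a + (i:ℤ), hmemP i hi⟩ : ↥(PP L)) : ℤ) ∈ Finset.Icc (x+a) (x+a+(k:ℤ)) := by
      simp only [Finset.mem_Icc]; omega
    have := congrFun h ⟨x + a + (i:ℤ), hmemP i hi⟩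
    simp only [Psi, hmem, if_true] at this
    have harg : x + a + (i:ℤ) - a = x + (i:ℤ) := by ring
    rwa [harg] at this
  -- the sum identity
  have hsum : ∀ i : ℕ, i ≤ k →
      ∑ j ∈ Finset.range (k+1), d (x+a+(j:ℤ)) * evol single t (x + (i:ℤ) - (x+a+(j:ℤ))) = 0 := by
    intro i hi
    have h0' : ∑ y ∈ PP L, d y * evol single t (x + (i:ℤ) - y) = 0 := by
      have := hPhi i hi
      simp only [Phi] at this
      have : ∑ y ∈ PP L, (extW L w y * evol single t (x + (i:ℤ) - y)
          - extW L w' y * evol single t (x + (i:ℤ) - y)) = 0 := by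
        rw [Finset.sum_sub_distrib, this, sub_self]
      rw [← this]
      exact Finset.sum_congr rfl fun y _ => by rw [hd]; ring
    -- restrict to the window
    have hsub : Finset.Icc (x+a) (x+a+(k:ℤ)) ⊆ PP L := by
      intro y hy
      simp only [Finset.mem_Icc] at hy
      simp only [PP, Finset.mem_Icc]
      omega
    have h1' : ∑ y ∈ Finset.Icc (x+a) (x+a+(k:ℤ)), d y * evol single t (x + (i:ℤ) - y) = 0 := by
      rw [← h0']
      exact Finset.sum_subset hsub (fun y _ hy => by rw [hd_out y hy, zero_mul])
    rw [← h1']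
    -- reindex
    refine Finset.sum_nbij' (fun j => x + a + (j:ℤ)) (fun y => (y - (x+a)).toNat) ?_ ?_ ?_ ?_ ?_
    · intro j hj; simp only [Finset.mem_range] at hj; simp only [Finset.mem_Icc]; omega
    · intro y hy; simp only [Finset.mem_Icc] at hy; simp only [Finset.mem_range]; omega
    · intro j hj; simp only [Finset.mem_range] at hj; omega
    · intro y hy; simp only [Finset.mem_Icc] at hy; omega
    · intro j hj; rfl
  -- strong induction on window positions
  have hwin : ∀ i : ℕ, i ≤ k → d (x + a + (i:ℤ)) = 0 := by
    intro i
    induction i using Nat.strong_induction_on with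
    | _ i ih =>
      intro hi
      have hs := hsum i hi
      rw [Finset.sum_eq_single_of_mem i (Finset.mem_range.mpr (by omega))] at hs
      · have harg : x + (i:ℤ) - (x+a+(i:ℤ)) = -a := by ring
        rw [harg, evol_single_neg, h1, mul_one] at hs
        exact hs
      · intro j hj hne
        simp only [Finset.mem_range] at hj
        rcases lt_or_gt_of_ne hne with hlt | hgt
        · rw [ih j hlt (by omega), zero_mul]
        · have harg : x + (i:ℤ) - (x+a+(j:ℤ)) = -(a + ((j - i : ℕ) : ℤ)) := by
            push_cast; omega
          rw [harg, evol_single_neg, h0 (j - i) (by omega) (by omega), mul_zero]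
  -- conclude
  funext y
  by_cases hy : (y:ℤ) ∈ Finset.Icc (x+a) (x+a+(k:ℤ))
  · simp only [Finset.mem_Icc] at hy
    set i : ℕ := ((y:ℤ) - (x+a)).toNat with hi_def
    have hyi : (y:ℤ) = x + a + (i:ℤ) := by omega
    have hik : i ≤ k := by omega
    have := hwin i hik
    rw [← hyi] at this
    have hyP : (y:ℤ) ∈ PP L := y.2
    simp only [hd, extW, hyP, dif_pos] at this
    have : w ⟨(y:ℤ), hyP⟩ = w' ⟨(y:ℤ), hyP⟩ := by
      rwa [sub_eq_zero] at this
    simpa using this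
  · exact hout y hy

end inj

open Finset in
/-- Counting functions with prescribed values on a finset. -/
lemma card_fix {α β : Type*} [Fintype α] [DecidableEq α] [Fintype β] [DecidableEq β]
    (T : Finset α) (g : α → β) :
    (Finset.univ.filter fun w : α → β => ∀ a ∈ T, w a = g a).card
      = Fintype.card β ^ (Fintype.card α - T.card) := by
  classical
  have : (Finset.univ.filter fun w : α → β => ∀ a ∈ T, w a = g a).card
      = (Finset.univ : Finset (↥(Tᶜ) → β)).card := by
    refine Finset.card_bij' (fun w _ => fun a : ↥(Tᶜ) => w a.1)
      (fun u _ => fun a => if h : a ∈ T then g a else u ⟨a, Finset.mem_compl.mpr h⟩)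
      ?_ ?_ ?_ ?_
    · intro w _; exact Finset.mem_univ _
    · intro u _
      simp only [Finset.mem_filter, Finset.mem_univ, true_and]
      intro a ha; simp [ha]
    · intro w hw
      simp only [Finset.mem_filter, Finset.mem_univ, true_and] at hw
      funext a
      by_cases ha : a ∈ T
      · simp [ha, hw a ha]
      · simp [ha]
    · intro u _
      funext a
      have ha : a.1 ∉ T := Finset.mem_compl.mp a.2
      simp [ha]
  rw [this, Finset.card_univ, Fintype.card_fun, Fintype.card_coe, Finset.card_compl]

lemma pow_arith (L s : ℕ) (hs : s ≤ L + 1) :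
    ((2 ^ (L + 1 - s) : ℕ) : ENNReal) * (2:ENNReal)⁻¹ ^ (L+1) = (2:ENNReal)⁻¹ ^ s := by
  set m := L + 1 - s with hm
  have hcast : ((2 ^ m : ℕ) : ENNReal) = 2 ^ m := by push_cast; rfl
  rw [hcast, show L + 1 = m + s by omega, pow_add, ← mul_assoc, ← mul_pow,
    ENNReal.mul_inv_cancel two_ne_zero (by norm_num), one_pow, one_mul]


theorem random_intervals {Ω : Type*} [MeasurableSpace Ω]
    (μ : Measure Ω) [IsProbabilityMeasure μ]
    (a : ℤ) (L k : ℕ) (hL : 0 < L) (hk : 0 < k) (init : Ω → Config)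
    (hrand : IIDFairOn μ init (Set.Icc (0 : ℤ) L))
    (hzero : ∀ x ∉ Set.Icc (0 : ℤ) (L : ℤ), ∀ ω, init ω x = 0)
    (t : ℕ)
    (h1 : evol single t a = 1)
    (h0 : ∀ i : ℕ, 1 ≤ i → i ≤ k → evol single t (a + i) = 0)
    (x : ℤ) (hx1 : -a ≤ x) (hx2 : x ≤ (L : ℤ) - a - k) :
    ∀ (S : Finset (Fin (k + 1))) (v : Fin (k + 1) → ZMod 2),
      μ {ω | ∀ i ∈ S, evol (init ω) t (x + (i : ℕ)) = v i} = (2 : ENNReal)⁻¹ ^ S.card := by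
  classical
  intro S v
  have hs : S.card ≤ L + 1 := by
    have h1'' : S.card ≤ k + 1 := by simpa using Finset.card_le_univ S
    have hkL : k ≤ L := by
      have h2'' : (k:ℤ) ≤ (L:ℤ) := by omega
      exact_mod_cast h2''
    omega
  have hw1 : 0 ≤ x + a := by omega
  have hw2 : x + a + (k:ℤ) ≤ (L:ℤ) := by omega
  have hcardP : (PP L).card = L + 1 := by
    rw [PP, Int.card_Icc]; omega
  -- atoms
  set r : Ω → (↥(PP L) → ZMod 2) := fun ω y => init ω y.1 with hr
  set A : (↥(PP L) → ZMod 2) → Set Ω := fun w => {ω | ∀ y ∈ PP L, init ω y = extW L w y}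
    with hA
  have hAr : ∀ w ω, ω ∈ A w ↔ r ω = w := by
    intro w ω
    constructor
    · intro hω
      funext y
      have := hω y.1 y.2
      simpa [hr, extW, y.2] using this
    · rintro rfl
      intro y hy
      simp [hr, extW, hy]
  have hμA : ∀ w, μ (A w) = (2:ENNReal)⁻¹ ^ (L+1) := by
    intro w
    have := hrand (PP L) (by rw [PP, Finset.coe_Icc]) (extW L w)
    rwa [hcardP] at this
  -- the event as a union of atoms
  set p : (↥(PP L) → ZMod 2) → Prop :=
    fun w => ∀ i ∈ S, Phi L t (extW L w) (x + ((i:ℕ):ℤ)) = v i with hp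
  have hEiff : ∀ ω, (∀ i ∈ S, evol (init ω) t (x + ((i:ℕ):ℤ)) = v i) ↔ p (r ω) := by
    intro ω
    have key : ∀ i : Fin (k+1), evol (init ω) t (x + ((i:ℕ):ℤ))
        = Phi L t (extW L (r ω)) (x + ((i:ℕ):ℤ)) := by
      intro i
      rw [evol_eq_Phi L t (init ω) (fun y hy => hzero y hy ω)]
      exact Phi_congr L t _ _ (fun y hy => by simp [hr, extW, hy]) _
    exact forall₂_congr fun i _ => by rw [key i]
  set G : Finset (↥(PP L) → ZMod 2) := Finset.univ.filter p with hG
  set B : Finset (↥(PP L) → ZMod 2) := Finset.univ.filter (fun w => ¬ p w) with hB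
  have hE : {ω | ∀ i ∈ S, evol (init ω) t (x + ((i:ℕ):ℤ)) = v i} = ⋃ w ∈ G, A w := by
    ext ω
    simp only [Set.mem_setOf_eq, Set.mem_iUnion, exists_prop]
    constructor
    · intro hω
      exact ⟨r ω, Finset.mem_filter.mpr ⟨Finset.mem_univ _, (hEiff ω).1 hω⟩, (hAr (r ω) ω).mpr rfl⟩
    · rintro ⟨w, hwG, hωA⟩
      have hwr : r ω = w := (hAr w ω).mp hωA
      apply (hEiff ω).2
      rw [hwr]
      exact (Finset.mem_filter.mp hwG).2
  set q : ENNReal := (2:ENNReal)⁻¹ ^ (L+1) with hq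
  have hq_ne_top : q ≠ ⊤ := by
    simp [hq]
  have hle1 : μ (⋃ w ∈ G, A w) ≤ G.card * q := by
    calc μ (⋃ w ∈ G, A w) ≤ ∑ w ∈ G, μ (A w) := measure_biUnion_finset_le G A
    _ = G.card * q := by simp [hμA, Finset.sum_const, nsmul_eq_mul, hq]
  have hle2 : μ (⋃ w ∈ B, A w) ≤ B.card * q := by
    calc μ (⋃ w ∈ B, A w) ≤ ∑ w ∈ B, μ (A w) := measure_biUnion_finset_le B A
    _ = B.card * q := by simp [hμA, Finset.sum_const, nsmul_eq_mul, hq]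
  have hone : (1:ENNReal) ≤ μ (⋃ w ∈ G, A w) + μ (⋃ w ∈ B, A w) := by
    have hcover : (Set.univ : Set Ω) ⊆ (⋃ w ∈ G, A w) ∪ (⋃ w ∈ B, A w) := by
      intro ω _
      by_cases hpω : p (r ω)
      · exact Or.inl (Set.mem_biUnion (Finset.mem_filter.mpr ⟨Finset.mem_univ _, hpω⟩) ((hAr _ ω).mpr rfl))
      · exact Or.inr (Set.mem_biUnion (Finset.mem_filter.mpr ⟨Finset.mem_univ _, hpω⟩) ((hAr _ ω).mpr rfl))
    calc (1:ENNReal) = μ Set.univ := measure_univ.symm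
    _ ≤ μ ((⋃ w ∈ G, A w) ∪ (⋃ w ∈ B, A w)) := measure_mono hcover
    _ ≤ _ := measure_union_le _ _
  -- cardinalities
  have hGB : G.card + B.card = 2 ^ (L+1) := by
    rw [hG, hB, Finset.card_filter_add_card_filter_not, Finset.card_univ,
      Fintype.card_fun, Fintype.card_coe, hcardP]
    simp
  -- window positions
  have hmemP : ∀ i : Fin (k+1), x + a + ((i:ℕ):ℤ) ∈ PP L := by
    intro i
    have := i.isLt
    simp only [PP, Finset.mem_Icc]
    omega
  set pos : Fin (k+1) → ↥(PP L) := fun i => ⟨x + a + ((i:ℕ):ℤ), hmemP i⟩ with hpos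
  have hpos_inj : Function.Injective pos := by
    intro i j hij
    have : x + a + ((i:ℕ):ℤ) = x + a + ((j:ℕ):ℤ) := congrArg Subtype.val hij
    have : (i:ℕ) = (j:ℕ) := by omega
    exact Fin.ext this
  have hG_as : G = Finset.univ.filter (fun w => ∀ i ∈ S, Psi L t a x k w (pos i) = v i) := by
    rw [hG]
    refine Finset.filter_congr fun w _ => ?_
    have key : ∀ i : Fin (k+1), Psi L t a x k w (pos i)
        = Phi L t (extW L w) (x + ((i:ℕ):ℤ)) := by
      intro i
      have hi := i.isLt
      have hmem : ((pos i : ↥(PP L)) : ℤ) ∈ Finset.Icc (x+a) (x+a+(k:ℤ)) := by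
        simp only [hpos, Finset.mem_Icc]
        omega
      have harg : ((pos i : ↥(PP L)) : ℤ) - a = x + ((i:ℕ):ℤ) := by
        simp only [hpos]; ring
      simp only [Psi, hmem, if_true, harg]
    exact forall₂_congr fun i _ => by rw [key i]
  have hΨbij : Function.Bijective (Psi L t a x k) :=
    Finite.injective_iff_bijective.mp (Psi_injective h1 h0 hw1 hw2)
  set e := Equiv.ofBijective _ hΨbij with he
  have hcard_psi : (Finset.univ.filter (fun w => ∀ i ∈ S, Psi L t a x k w (pos i) = v i)).card
      = (Finset.univ.filter (fun w : ↥(PP L) → ZMod 2 => ∀ i ∈ S, w (pos i) = v i)).card := by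
    refine Finset.card_bij' (fun w _ => Psi L t a x k w) (fun w _ => e.symm w) ?_ ?_ ?_ ?_
    · intro w hw
      simp only [Finset.mem_filter, Finset.mem_univ, true_and] at hw ⊢
      exact hw
    · intro w hw
      simp only [Finset.mem_filter, Finset.mem_univ, true_and] at hw ⊢
      intro i hi
      have hsy : Psi L t a x k (e.symm w) = w := e.apply_symm_apply w
      rw [hsy]
      exact hw i hi
    · intro w _
      exact e.symm_apply_apply w
    · intro w _
      exact e.apply_symm_apply w
  have hfix : (Finset.univ.filter (fun w : ↥(PP L) → ZMod 2 => ∀ i ∈ S, w (pos i) = v i)).card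
      = 2 ^ ((L+1) - S.card) := by
    have hiff : ∀ w : ↥(PP L) → ZMod 2,
        (∀ i ∈ S, w (pos i) = v i) ↔ (∀ y ∈ S.image pos, w y = Function.extend pos v 0 y) := by
      intro w
      constructor
      · intro h y hy
        obtain ⟨i, hi, rfl⟩ := Finset.mem_image.mp hy
        rw [hpos_inj.extend_apply]
        exact h i hi
      · intro h i hi
        have := h (pos i) (Finset.mem_image_of_mem _ hi)
        rwa [hpos_inj.extend_apply] at this
    rw [Finset.filter_congr fun w _ => hiff w]
    rw [card_fix (S.image pos) (Function.extend pos v 0)]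
    rw [Finset.card_image_of_injective S hpos_inj, Fintype.card_coe, hcardP]
    simp
  have hGcard : G.card = 2 ^ ((L+1) - S.card) := by
    rw [hG_as, hcard_psi, hfix]
  -- arithmetic
  have hBq_ne_top : (B.card : ENNReal) * q ≠ ⊤ :=
    ENNReal.mul_ne_top (ENNReal.natCast_ne_top _) hq_ne_top
  have hsumGB : (G.card : ENNReal) * q + (B.card : ENNReal) * q = 1 := by
    rw [← add_mul, ← Nat.cast_add, hGB]
    have : ((2 ^ (L+1) : ℕ) : ENNReal) = 2 ^ (L+1) := by push_cast; rfl
    rw [this, hq, ← mul_pow, ENNReal.mul_inv_cancel two_ne_zero (by norm_num), one_pow]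
  have hEle : μ {ω | ∀ i ∈ S, evol (init ω) t (x + ((i:ℕ):ℤ)) = v i} ≤ (G.card : ENNReal) * q := by
    rw [hE]; exact hle1
  have hEge : (G.card : ENNReal) * q ≤ μ {ω | ∀ i ∈ S, evol (init ω) t (x + ((i:ℕ):ℤ)) = v i} := by
    have h1' : (G.card : ENNReal) * q = 1 - (B.card : ENNReal) * q :=
      ENNReal.eq_sub_of_add_eq hBq_ne_top hsumGB
    rw [h1', tsub_le_iff_right]
    calc (1:ENNReal) ≤ μ (⋃ w ∈ G, A w) + μ (⋃ w ∈ B, A w) := hone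
    _ ≤ _ + (B.card : ENNReal) * q := add_le_add le_rfl hle2
    _ = _ := by rw [← hE]
  have hμE : μ {ω | ∀ i ∈ S, evol (init ω) t (x + ((i:ℕ):ℤ)) = v i} = (G.card : ENNReal) * q :=
    le_antisymm hEle hEge
  rw [hμE, hGcard, hq]
  exact pow_arith L S.card hs
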